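/- arXiv:2411.04916 — 2 statements merged into one kernel-verified Lean document; each statement's English description precedes it below -/
import Mathlib

section
/- Let n ≥ 18, let C ⊆ 𝔽₂ⁿ be a finite set of vectors each of Hamming weight exactly 8 with pairwise Hamming distances at least 8, and let V ⊆ ℝⁿ be the odd-signs kissing configuration associated to C. Let D ⊆ 𝔽₂ⁿ be a finite set such that (a) every d ∈ D satisfies Σᵢ dᵢcᵢ = 0 in 𝔽₂ for every c ∈ C, and (b) any two distinct elements of D have Hamming distance at least n/4. For d ∈ D define v_d ∈ ℝⁿ by (v_d)ᵢ = (−1)^{dᵢ}·√(8/n). Then every vector in V ∪ {v_d : d ∈ D} has squared Euclidean norm 8, any two distinct vectors in V ∪ {v_d : d ∈ D} have inner product at most 4, and |V ∪ {v_d : d ∈ D}| = 4·(n choose 2) + 128·|C| + |D|. -/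
open scoped RealInnerProductSpace

/-- The odd-signs kissing configuration in `ℝⁿ` associated to a constant-weight-8
binary code `C ⊆ 𝔽₂ⁿ`: the union of (i) all vectors with exactly two nonzero
coordinates, each equal to `2` or `-2`, and (ii) all vectors with entries `±1` on
the support of some codeword `c ∈ C` and `0` elsewhere, having an odd number of
entries equal to `-1`. -/
def oddKissingConfig (n : ℕ) (C : Finset (Fin n → ZMod 2)) :
    Set (EuclideanSpace ℝ (Fin n)) :=
  {w | (∃ i j : Fin n, i ≠ j ∧ (w i = 2 ∨ w i = -2) ∧ (w j = 2 ∨ w j = -2) ∧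
          ∀ k : Fin n, k ≠ i → k ≠ j → w k = 0) ∨
       (∃ c ∈ C, (∀ i : Fin n, c i ≠ 0 → (w i = 1 ∨ w i = -1)) ∧
          (∀ i : Fin n, c i = 0 → w i = 0) ∧
          Odd {i : Fin n | w i = -1}.ncard)}

/-- The vector `v_d ∈ ℝⁿ` with `(v_d)ᵢ = (-1)^{dᵢ}·√(8/n)` associated to `d ∈ 𝔽₂ⁿ`. -/
noncomputable def signVector (n : ℕ) (d : Fin n → ZMod 2) : EuclideanSpace ℝ (Fin n) :=
  WithLp.toLp 2 (fun i => (if d i = 0 then (1 : ℝ) else -1) * Real.sqrt (8 / n))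

/-!
Write `k` for the number of minus signs of a vector `f` that is `±1` on a set `S`; then
`∑ i ∈ S, f i = #S - 2 k` and `∏ i ∈ S, f i = (-1) ^ k`, so the parity conditions of the
configuration become conditions on products of signs. Two distinct odd sign patterns on the same
weight-8 support multiply to an even pattern with `k ≥ 2`, giving inner product at most `8 - 4`.
An odd pattern on the support of `c`, multiplied by the signs of a word `d` orthogonal to `c`,
stays odd, so its inner product with `v_d` is at most `(8 - 2) √(8/n)`, which is `≤ 4` exactly
when `n ≥ 18`. Distinct codewords share at most `(8 + 8 - 8) / 2 = 4` coordinates, two sign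
vectors have inner product `8 (1 - 2 d(d, d') / n) ≤ 4`, and a vector with two entries `±2`
meets any vector with entries in `[-1, 1]` in at most `2 + 2`. The three kinds of vectors have
supports of sizes 2, 8 and `n`, so they are distinct, and counting each kind gives the size.
-/

open Finset

section Signs

variable {ι : Type*} {S : Finset ι} {f : ι → ℝ}

theorem sum_eq_card_sub_two_mul_card_neg_one (hf : ∀ i ∈ S, f i = 1 ∨ f i = -1) :
    ∑ i ∈ S, f i = #S - 2 * #{i ∈ S | f i = -1} := by
  have hpos : ∀ i ∈ S.filter (¬ f · = -1), f i = 1 := fun i hi =>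
    (hf i (mem_filter.1 hi).1).resolve_right (mem_filter.1 hi).2
  rw [← sum_filter_add_sum_filter_not S (f · = -1),
    sum_congr rfl (fun i hi => (mem_filter.1 hi).2), sum_congr rfl hpos,
    ← card_filter_add_card_filter_not (s := S) (f · = -1)]
  simp only [sum_const, nsmul_eq_mul, Nat.cast_add]
  ring

theorem prod_eq_neg_one_pow_card_neg_one (hf : ∀ i ∈ S, f i = 1 ∨ f i = -1) :
    ∏ i ∈ S, f i = (-1) ^ #{i ∈ S | f i = -1} := by
  have hpos : ∀ i ∈ S.filter (¬ f · = -1), f i = 1 := fun i hi =>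
    (hf i (mem_filter.1 hi).1).resolve_right (mem_filter.1 hi).2
  rw [← prod_filter_mul_prod_filter_not S (f · = -1),
    prod_congr rfl (fun i hi => (mem_filter.1 hi).2), prod_congr rfl hpos]
  simp

theorem sum_le_card_sub_two_of_prod_eq_neg_one (hf : ∀ i ∈ S, f i = 1 ∨ f i = -1)
    (hprod : ∏ i ∈ S, f i = -1) : ∑ i ∈ S, f i ≤ #S - 2 := by
  rw [prod_eq_neg_one_pow_card_neg_one hf,
    neg_one_pow_eq_neg_one_iff_odd (by norm_num)] at hprod
  have : (1 : ℝ) ≤ #{i ∈ S | f i = -1} := by exact_mod_cast hprod.pos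
  rw [sum_eq_card_sub_two_mul_card_neg_one hf]
  linarith

theorem sum_le_card_sub_four_of_prod_eq_one (hf : ∀ i ∈ S, f i = 1 ∨ f i = -1)
    (hprod : ∏ i ∈ S, f i = 1) (hneg : ∃ i ∈ S, f i = -1) :
    ∑ i ∈ S, f i ≤ #S - 4 := by
  rw [prod_eq_neg_one_pow_card_neg_one hf,
    neg_one_pow_eq_one_iff_even (by norm_num)] at hprod
  have hpos : 0 < #{i ∈ S | f i = -1} := card_pos.2 (by simpa [Finset.Nonempty] using hneg)
  have : (2 : ℝ) ≤ #{i ∈ S | f i = -1} := by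
    obtain ⟨m, hm⟩ := hprod
    exact_mod_cast (by omega : 2 ≤ #{i ∈ S | f i = -1})
  rw [sum_eq_card_sub_two_mul_card_neg_one hf]
  linarith

end Signs

theorem zmod_two_eq_zero_or_one (a : ZMod 2) : a = 0 ∨ a = 1 := by
  revert a; decide

def zmodSign (a : ZMod 2) : ℝ := if a = 0 then 1 else -1

theorem zmodSign_eq_one_or_neg_one (a : ZMod 2) : zmodSign a = 1 ∨ zmodSign a = -1 := by
  unfold zmodSign; split_ifs <;> simp

theorem zmodSign_add (a b : ZMod 2) : zmodSign (a + b) = zmodSign a * zmodSign b := by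
  rcases zmod_two_eq_zero_or_one a with rfl | rfl <;>
    rcases zmod_two_eq_zero_or_one b with rfl | rfl <;> simp +decide [zmodSign]

theorem zmodSign_mul_eq_neg_one_iff {a b : ZMod 2} : zmodSign a * zmodSign b = -1 ↔ a ≠ b := by
  rcases zmod_two_eq_zero_or_one a with rfl | rfl <;>
    rcases zmod_two_eq_zero_or_one b with rfl | rfl <;> norm_num +decide [zmodSign]

theorem prod_zmodSign {ι : Type*} (S : Finset ι) (z : ι → ZMod 2) :
    ∏ i ∈ S, zmodSign (z i) = zmodSign (∑ i ∈ S, z i) := by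
  classical
  induction S using Finset.induction_on with
  | empty => simp [zmodSign]
  | insert a S ha ih => rw [prod_insert ha, sum_insert ha, ih, zmodSign_add]

section VectorsOn

variable {ι : Type*} [Fintype ι] [DecidableEq ι]

noncomputable def vectorsOn (S : Finset ι) (A : Finset ℝ) : Finset (EuclideanSpace ℝ ι) :=
  (Fintype.piFinset fun i => if i ∈ S then A else {0}).image (WithLp.toLp 2)

variable {S T : Finset ι} {A B : Finset ℝ} {v w : EuclideanSpace ℝ ι}

theorem mem_vectorsOn :
    v ∈ vectorsOn S A ↔ (∀ i ∈ S, v i ∈ A) ∧ ∀ i ∉ S, v i = 0 := by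
  constructor
  · intro hv
    obtain ⟨f, hf, rfl⟩ := mem_image.1 hv
    rw [Fintype.mem_piFinset] at hf
    refine ⟨fun i hi => by simpa [hi] using hf i, fun i hi => by simpa [hi] using hf i⟩
  · rintro ⟨hS, hSc⟩
    refine mem_image.2 ⟨v.ofLp, Fintype.mem_piFinset.2 fun i => ?_, rfl⟩
    by_cases hi : i ∈ S
    · simpa [hi] using hS i hi
    · simpa [hi] using hSc i hi

theorem card_vectorsOn : #(vectorsOn S A) = #A ^ #S := by
  rw [vectorsOn, card_image_of_injective _ (WithLp.toLp_injective 2), Fintype.card_piFinset]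
  simp [apply_ite Finset.card, prod_ite_mem]

theorem support_eq_of_mem_vectorsOn (hA : 0 ∉ A) (hv : v ∈ vectorsOn S A) :
    ({i | v i ≠ 0} : Finset ι) = S := by
  rw [mem_vectorsOn] at hv
  ext i
  by_cases hi : i ∈ S
  · simp only [mem_filter, mem_univ, true_and, hi, iff_true]
    exact fun h => hA (h ▸ hv.1 i hi)
  · simp [hi, hv.2 i hi]

theorem disjoint_vectorsOn (hA : 0 ∉ A) (hB : 0 ∉ B) (hST : S ≠ T) :
    Disjoint (vectorsOn S A) (vectorsOn T B) :=
  disjoint_left.2 fun _ hS hT =>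
    hST ((support_eq_of_mem_vectorsOn hA hS).symm.trans (support_eq_of_mem_vectorsOn hB hT))

theorem inner_eq_sum_of_mem_vectorsOn (hv : v ∈ vectorsOn S A) :
    ⟪v, w⟫ = ∑ i ∈ S, v i * w i := by
  rw [PiLp.inner_apply, ← sum_subset (subset_univ S)]
  · exact sum_congr rfl fun i _ => by simp [mul_comm]
  · intro i _ hi
    simp [(mem_vectorsOn.1 hv).2 i hi]

theorem norm_sq_of_mem_vectorsOn {r : ℝ} (hv : v ∈ vectorsOn S A)
    (hA : ∀ a ∈ A, a ^ 2 = r) :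
    ‖v‖ ^ 2 = #S * r := by
  rw [← real_inner_self_eq_norm_sq, inner_eq_sum_of_mem_vectorsOn hv,
    sum_congr rfl fun i hi => (sq (v i)).symm.trans (hA _ ((mem_vectorsOn.1 hv).1 i hi))]
  simp

theorem abs_apply_le_of_mem_vectorsOn {r : ℝ} (hr : 0 ≤ r) (hA : ∀ a ∈ A, |a| ≤ r)
    (hv : v ∈ vectorsOn S A) (i : ι) : |v i| ≤ r := by
  rw [mem_vectorsOn] at hv
  by_cases hi : i ∈ S
  · exact hA _ (hv.1 i hi)
  · simpa [hv.2 i hi] using hr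

end VectorsOn

section PairVectors

variable (ι : Type*) [Fintype ι] [DecidableEq ι]

noncomputable def pairVectors : Finset (EuclideanSpace ℝ ι) :=
  (univ.powersetCard 2).biUnion fun S => vectorsOn S {2, -2}

variable {ι} {v w : EuclideanSpace ℝ ι}

theorem mem_pairVectors : v ∈ pairVectors ι ↔ ∃ i j, i ≠ j ∧ (v i = 2 ∨ v i = -2) ∧
    (v j = 2 ∨ v j = -2) ∧ ∀ k, k ≠ i → k ≠ j → v k = 0 := by
  simp only [pairVectors, mem_biUnion, mem_powersetCard, subset_univ, true_and, card_eq_two]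
  constructor
  · rintro ⟨_, ⟨i, j, hij, rfl⟩, hv⟩
    rw [mem_vectorsOn] at hv
    refine ⟨i, j, hij, by simpa using hv.1 i (by simp), by simpa using hv.1 j (by simp),
      fun k hki hkj => hv.2 k (by simp [hki, hkj])⟩
  · rintro ⟨i, j, hij, hi, hj, hk⟩
    refine ⟨{i, j}, ⟨i, j, hij, rfl⟩, mem_vectorsOn.2 ⟨?_, fun k hk' => ?_⟩⟩
    · simp only [mem_insert, mem_singleton, forall_eq_or_imp, forall_eq]
      exact ⟨hi, hj⟩
    · simp only [mem_insert, mem_singleton, not_or] at hk'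
      exact hk k hk'.1 hk'.2

theorem card_pairVectors : #(pairVectors ι) = 4 * (Fintype.card ι).choose 2 := by
  rw [pairVectors,
    card_biUnion fun S _ T _ hST => disjoint_vectorsOn (by norm_num) (by norm_num) hST,
    sum_congr rfl fun S hS => by rw [card_vectorsOn, (mem_powersetCard.1 hS).2],
    sum_const, card_powersetCard, card_univ]
  norm_num [mul_comm]

theorem exists_of_mem_pairVectors (hv : v ∈ pairVectors ι) :
    ∃ S, #S = 2 ∧ v ∈ vectorsOn S {2, -2} := by
  simpa [pairVectors] using hv

theorem norm_sq_of_mem_pairVectors (hv : v ∈ pairVectors ι) : ‖v‖ ^ 2 = 8 := by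
  obtain ⟨S, hS, hv⟩ := exists_of_mem_pairVectors hv
  rw [norm_sq_of_mem_vectorsOn hv (r := 4) (by norm_num), hS]
  norm_num

theorem inner_le_four_of_mem_pairVectors (hv : v ∈ pairVectors ι) (hw : ∀ i, |w i| ≤ 1) :
    ⟪v, w⟫ ≤ 4 := by
  obtain ⟨S, hS, hv⟩ := exists_of_mem_pairVectors hv
  have hterm : ∀ i ∈ S, v i * w i ≤ 2 := fun i hi => by
    have hvi : |v i| = 2 := by
      rcases (by simpa using (mem_vectorsOn.1 hv).1 i hi : v i = 2 ∨ v i = -2) with h | h <;>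
        simp [h]
    calc v i * w i ≤ |v i| * |w i| := (le_abs_self _).trans (abs_mul _ _).le
      _ ≤ 2 * 1 := by rw [hvi]; gcongr; exact hw i
      _ = 2 := by norm_num
  calc ⟪v, w⟫ = ∑ i ∈ S, v i * w i := inner_eq_sum_of_mem_vectorsOn hv
    _ ≤ #S • (2 : ℝ) := sum_le_card_nsmul _ _ _ hterm
    _ = 4 := by rw [hS]; norm_num

theorem inner_le_four_of_mem_pairVectors_of_ne (hv : v ∈ pairVectors ι)
    (hw : w ∈ pairVectors ι) (hne : v ≠ w) : ⟪v, w⟫ ≤ 4 := by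
  obtain ⟨S, hS, hv⟩ := exists_of_mem_pairVectors hv
  obtain ⟨T, hT, hw⟩ := exists_of_mem_pairVectors hw
  rw [mem_vectorsOn] at hv hw
  have hterm : ∀ i ∈ S, v i * w i ≤ 4 ∧ (v i ≠ w i → v i * w i ≤ 0) := fun i hi => by
    have hvi : v i = 2 ∨ v i = -2 := by simpa using hv.1 i hi
    have hwi : w i = 2 ∨ w i = -2 ∨ w i = 0 := by
      by_cases h : i ∈ T
      · simpa [or_assoc] using Or.inl (hw.1 i h)
      · exact Or.inr (Or.inr (hw.2 i h))
    rcases hvi with h | h <;> rcases hwi with h' | h' | h' <;> norm_num [h, h']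
  by_contra! hgt
  have hagree : ∀ i ∈ S, v i = w i := by
    obtain ⟨a, b, hab, rfl⟩ := card_eq_two.1 hS
    rw [inner_eq_sum_of_mem_vectorsOn (mem_vectorsOn.2 hv), sum_pair hab] at hgt
    simp only [mem_insert, mem_singleton, forall_eq_or_imp, forall_eq]
    constructor <;> by_contra h
    · linarith [(hterm a (by simp)).2 h, (hterm b (by simp)).1]
    · linarith [(hterm b (by simp)).2 h, (hterm a (by simp)).1]
  have hST : S = T := by
    refine eq_of_subset_of_card_le (fun i hi => ?_) (by rw [hS, hT])
    by_contra hiT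
    simpa [hagree i hi, hw.2 i hiT] using hv.1 i hi
  subst hST
  exact hne <| PiLp.ext fun i =>
    if hi : i ∈ S then hagree i hi else by rw [hv.2 i hi, hw.2 i hi]

end PairVectors

section OddSignVectors

variable {ι : Type*} [Fintype ι] [DecidableEq ι]

noncomputable def oddSignVectors (S : Finset ι) : Finset (EuclideanSpace ℝ ι) :=
  (vectorsOn S {1, -1}).filter fun v => ∏ i ∈ S, v i = -1

variable {S T : Finset ι} {v w : EuclideanSpace ℝ ι}

theorem mem_vectorsOn_one_neg_one : v ∈ vectorsOn S {1, -1} ↔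
    (∀ i ∈ S, v i = 1 ∨ v i = -1) ∧ ∀ i ∉ S, v i = 0 := by
  simp [mem_vectorsOn]

theorem mem_oddSignVectors : v ∈ oddSignVectors S ↔ (∀ i ∈ S, v i = 1 ∨ v i = -1) ∧
    (∀ i ∉ S, v i = 0) ∧ Odd {i | v i = -1}.ncard := by
  rw [oddSignVectors, mem_filter, mem_vectorsOn_one_neg_one, and_assoc]
  refine and_congr_right fun hS => and_congr_right fun hSc => ?_
  have hneg : {i | v i = -1} = ↑({i ∈ S | v i = -1} : Finset ι) := by
    ext i
    rw [coe_filter]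
    exact ⟨fun h => ⟨by_contra fun hi => by simp [hSc i hi] at h, h⟩, And.right⟩
  rw [hneg, Set.ncard_coe_finset, prod_eq_neg_one_pow_card_neg_one hS,
    neg_one_pow_eq_neg_one_iff_odd (by norm_num)]

theorem prod_eq_one_or_neg_one_of_mem_vectorsOn (hv : v ∈ vectorsOn S {1, -1}) :
    ∏ i ∈ S, v i = 1 ∨ ∏ i ∈ S, v i = -1 := by
  rw [prod_eq_neg_one_pow_card_neg_one (mem_vectorsOn_one_neg_one.1 hv).1]
  exact neg_one_pow_eq_or ℝ _

theorem card_oddSignVectors_eq_card_filter_not (hS : S.Nonempty) : #(oddSignVectors S) =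
    #((vectorsOn S {1, -1}).filter fun v => ¬ ∏ i ∈ S, v i = -1) := by
  obtain ⟨a, ha⟩ := hS
  -- negating the coordinate `a` exchanges the vectors of product `-1` and of product `1`
  let flip : EuclideanSpace ℝ ι → EuclideanSpace ℝ ι :=
    fun v => WithLp.toLp 2 (Function.update v.ofLp a (-v a))
  have hflip_mem : ∀ v ∈ vectorsOn S {1, -1}, flip v ∈ vectorsOn S {1, -1} := by
    intro v hv
    rw [mem_vectorsOn_one_neg_one] at hv ⊢
    refine ⟨fun i hi => ?_, fun i hi => ?_⟩
    · rcases eq_or_ne i a with rfl | hia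
      · simpa [flip, or_comm, neg_eq_iff_eq_neg] using hv.1 i hi
      · simpa [flip, hia] using hv.1 i hi
    · simpa [flip, ne_of_mem_of_not_mem ha hi |>.symm] using hv.2 i hi
  have hflip_prod : ∀ v : EuclideanSpace ℝ ι, ∏ i ∈ S, flip v i = -∏ i ∈ S, v i := by
    intro v
    simp only [flip, prod_update_of_mem ha, sdiff_singleton_eq_erase, ← mul_prod_erase S _ ha]
    ring
  have hflip_flip : ∀ v, flip (flip v) = v := fun v => by simp [flip]
  refine card_nbij' flip flip (fun v hv => ?_) (fun v hv => ?_)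
    (fun v _ => hflip_flip v) (fun v _ => hflip_flip v)
  · simp only [oddSignVectors, mem_coe, mem_filter] at hv ⊢
    refine ⟨hflip_mem v hv.1, ?_⟩
    rw [hflip_prod, hv.2]
    norm_num
  · simp only [mem_coe, mem_filter] at hv
    simp only [oddSignVectors, mem_coe, mem_filter]
    refine ⟨hflip_mem v hv.1, ?_⟩
    rw [hflip_prod, (prod_eq_one_or_neg_one_of_mem_vectorsOn hv.1).resolve_right hv.2]

theorem card_oddSignVectors (hS : S.Nonempty) : #(oddSignVectors S) = 2 ^ (#S - 1) := by
  have htotal := card_filter_add_card_filter_not (s := vectorsOn S {1, -1})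
    (fun v => ∏ i ∈ S, v i = -1)
  rw [← oddSignVectors, ← card_oddSignVectors_eq_card_filter_not hS, card_vectorsOn,
    card_pair (by norm_num)] at htotal
  have hpow : 2 ^ #S = 2 * 2 ^ (#S - 1) := by
    rw [← pow_succ', Nat.sub_add_cancel (card_pos.2 hS)]
  omega

theorem norm_sq_of_mem_oddSignVectors (hv : v ∈ oddSignVectors S) : ‖v‖ ^ 2 = #S := by
  rw [norm_sq_of_mem_vectorsOn (mem_filter.1 hv).1 (r := 1) (by norm_num), mul_one]

theorem abs_apply_le_one_of_mem_oddSignVectors (hv : v ∈ oddSignVectors S) (i : ι) :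
    |v i| ≤ 1 :=
  abs_apply_le_of_mem_vectorsOn zero_le_one (by norm_num) (mem_filter.1 hv).1 i

theorem inner_le_card_sub_four_of_mem_oddSignVectors (hv : v ∈ oddSignVectors S)
    (hw : w ∈ oddSignVectors S) (hne : v ≠ w) : ⟪v, w⟫ ≤ #S - 4 := by
  rw [oddSignVectors, mem_filter, mem_vectorsOn_one_neg_one] at hv hw
  have hpm : ∀ i ∈ S, v i * w i = 1 ∨ v i * w i = -1 := fun i hi => by
    rcases hv.1.1 i hi with h | h <;> rcases hw.1.1 i hi with h' | h' <;> norm_num [h, h']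
  have hprod : ∏ i ∈ S, v i * w i = 1 := by rw [prod_mul_distrib, hv.2, hw.2]; norm_num
  have hneg : ∃ i ∈ S, v i * w i = -1 := by
    obtain ⟨i, hi⟩ : ∃ i, v i ≠ w i := by
      by_contra! h
      exact hne (PiLp.ext h)
    have hiS : i ∈ S := by_contra fun hiS => hi (by rw [hv.1.2 i hiS, hw.1.2 i hiS])
    refine ⟨i, hiS, ?_⟩
    rcases hv.1.1 i hiS with h | h <;> rcases hw.1.1 i hiS with h' | h' <;>
      simp [h, h'] at hi ⊢
  rw [inner_eq_sum_of_mem_vectorsOn (mem_vectorsOn_one_neg_one.2 hv.1)]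
  exact sum_le_card_sub_four_of_prod_eq_one hpm hprod hneg

theorem inner_le_card_inter (hv : v ∈ vectorsOn S {1, -1}) (hw : w ∈ vectorsOn T {1, -1}) :
    ⟪v, w⟫ ≤ #(S ∩ T) := by
  rw [mem_vectorsOn_one_neg_one] at hv hw
  have hle : ∀ i ∈ S ∩ T, v i * w i ≤ 1 := fun i hi => by
    rw [mem_inter] at hi
    rcases hv.1 i hi.1 with h | h <;> rcases hw.1 i hi.2 with h' | h' <;> norm_num [h, h']
  calc ⟪v, w⟫ = ∑ i ∈ S, v i * w i :=
        inner_eq_sum_of_mem_vectorsOn (mem_vectorsOn_one_neg_one.2 hv)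
    _ = ∑ i ∈ S ∩ T, v i * w i := by
        refine (sum_subset inter_subset_left fun i hiS hi => ?_).symm
        rw [hw.2 i fun hiT => hi (mem_inter.2 ⟨hiS, hiT⟩), mul_zero]
    _ ≤ #(S ∩ T) • (1 : ℝ) := sum_le_card_nsmul _ _ _ hle
    _ = #(S ∩ T) := by simp

end OddSignVectors

section SignVec

variable {ι : Type*} {r : ℝ}

noncomputable def signVec (r : ℝ) (z : ι → ZMod 2) : EuclideanSpace ℝ ι :=
  WithLp.toLp 2 fun i => zmodSign (z i) * r

theorem signVec_apply (z : ι → ZMod 2) (i : ι) : signVec r z i = zmodSign (z i) * r := rfl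

theorem signVec_injective (hr : r ≠ 0) : Function.Injective (signVec (ι := ι) r) := by
  intro z z' h
  funext i
  have hi := congrArg (· i) h
  simp only [signVec_apply, mul_left_inj' hr] at hi
  by_contra hne
  have := zmodSign_mul_eq_neg_one_iff.2 hne
  rw [hi] at this
  rcases zmodSign_eq_one_or_neg_one (z' i) with h | h <;> rw [h] at this <;> norm_num at this

variable [Fintype ι] [DecidableEq ι]

theorem signVec_mem_vectorsOn (z : ι → ZMod 2) : signVec r z ∈ vectorsOn univ {r, -r} :=
  mem_vectorsOn.2 ⟨fun i _ => by rcases zmodSign_eq_one_or_neg_one (z i) with h | h <;>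
    simp [signVec_apply, h], fun i hi => absurd (mem_univ i) hi⟩

theorem norm_sq_signVec (z : ι → ZMod 2) : ‖signVec r z‖ ^ 2 = Fintype.card ι * r ^ 2 := by
  rw [norm_sq_of_mem_vectorsOn (signVec_mem_vectorsOn z) (r := r ^ 2) (by simp), card_univ]

theorem inner_signVec_signVec (z z' : ι → ZMod 2) :
    ⟪signVec r z, signVec r z'⟫ = (Fintype.card ι - 2 * hammingDist z z') * r ^ 2 := by
  have hpm : ∀ i ∈ univ, zmodSign (z i) * zmodSign (z' i) = 1 ∨
      zmodSign (z i) * zmodSign (z' i) = -1 := fun i _ => by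
    rcases zmodSign_eq_one_or_neg_one (z i) with h | h <;>
      rcases zmodSign_eq_one_or_neg_one (z' i) with h' | h' <;> norm_num [h, h']
  have hsum := sum_eq_card_sub_two_mul_card_neg_one hpm
  simp only [zmodSign_mul_eq_neg_one_iff, card_univ] at hsum
  rw [inner_eq_sum_of_mem_vectorsOn (signVec_mem_vectorsOn z), hammingDist, ← hsum, sum_mul]
  exact sum_congr rfl fun i _ => by rw [signVec_apply, signVec_apply]; ring

theorem inner_signVec_le_of_mem_oddSignVectors {S : Finset ι} {v : EuclideanSpace ℝ ι}
    {z : ι → ZMod 2} (hr : 0 ≤ r) (hz : ∑ i ∈ S, z i = 0) (hv : v ∈ oddSignVectors S) :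
    ⟪v, signVec r z⟫ ≤ (#S - 2) * r := by
  rw [oddSignVectors, mem_filter, mem_vectorsOn_one_neg_one] at hv
  have hpm : ∀ i ∈ S, v i * zmodSign (z i) = 1 ∨ v i * zmodSign (z i) = -1 := fun i hi => by
    rcases hv.1.1 i hi with h | h <;> rcases zmodSign_eq_one_or_neg_one (z i) with h' | h' <;>
      norm_num [h, h']
  have hprod : ∏ i ∈ S, v i * zmodSign (z i) = -1 := by
    rw [prod_mul_distrib, hv.2, prod_zmodSign, hz]
    simp [zmodSign]
  rw [inner_eq_sum_of_mem_vectorsOn (mem_vectorsOn_one_neg_one.2 hv.1)]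
  calc ∑ i ∈ S, v i * signVec r z i = (∑ i ∈ S, v i * zmodSign (z i)) * r := by
        rw [sum_mul]; exact sum_congr rfl fun i _ => by rw [signVec_apply]; ring
    _ ≤ (#S - 2) * r :=
        mul_le_mul_of_nonneg_right (sum_le_card_sub_two_of_prod_eq_neg_one hpm hprod) hr

end SignVec

section Codes

variable {ι : Type*} [Fintype ι]

def wordSupport {M : Type*} [Zero M] [DecidableEq M] (c : ι → M) : Finset ι := {i | c i ≠ 0}

theorem card_wordSupport {M : Type*} [Zero M] [DecidableEq M] (c : ι → M) :
    #(wordSupport c) = hammingNorm c := rfl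

theorem eq_of_wordSupport_eq {c c' : ι → ZMod 2} (h : wordSupport c = wordSupport c') :
    c = c' := by
  have key : ∀ a b : ZMod 2, (a ≠ 0 ↔ b ≠ 0) → a = b := by decide
  funext i
  exact key _ _ (by simpa [wordSupport] using congrArg (i ∈ ·) h)

theorem sum_wordSupport_eq_sum_mul (c d : ι → ZMod 2) :
    ∑ i ∈ wordSupport c, d i = ∑ i, d i * c i := by
  have key : ∀ a b : ZMod 2, (if b ≠ 0 then a else 0) = a * b := by decide
  rw [wordSupport, sum_filter]
  exact sum_congr rfl fun i _ => key (d i) (c i)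

variable [DecidableEq ι]

theorem hammingNorm_add_hammingNorm (c c' : ι → ZMod 2) :
    hammingNorm c + hammingNorm c' =
      hammingDist c c' + 2 * #(wordSupport c ∩ wordSupport c') := by
  have key : ∀ a b : ZMod 2, (if a ≠ 0 then 1 else 0) + (if b ≠ 0 then 1 else 0) =
      (if a ≠ b then 1 else 0) + 2 * (if a ≠ 0 ∧ b ≠ 0 then 1 else 0) := by decide
  rw [wordSupport, wordSupport, ← filter_and, hammingNorm, hammingNorm, hammingDist,
    card_filter, card_filter, card_filter, card_filter, mul_sum, ← sum_add_distrib,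
    ← sum_add_distrib]
  exact sum_congr rfl fun i _ => key (c i) (c' i)

noncomputable def codeVectors (C : Finset (ι → ZMod 2)) : Finset (EuclideanSpace ℝ ι) :=
  C.biUnion fun c => oddSignVectors (wordSupport c)

variable {C : Finset (ι → ZMod 2)} {v w : EuclideanSpace ℝ ι}

theorem card_codeVectors (hweight : ∀ c ∈ C, hammingNorm c = 8) :
    #(codeVectors C) = 128 * #C := by
  have hdisj : (C : Set (ι → ZMod 2)).PairwiseDisjoint fun c => oddSignVectors (wordSupport c) :=
    fun c _ c' _ hcc => (disjoint_vectorsOn (by norm_num) (by norm_num)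
      (mt eq_of_wordSupport_eq hcc)).mono (filter_subset _ _) (filter_subset _ _)
  rw [codeVectors, card_biUnion hdisj, sum_congr rfl fun c hc => by
    rw [card_oddSignVectors (card_pos.1 (by rw [card_wordSupport, hweight c hc]; norm_num)),
      card_wordSupport, hweight c hc], sum_const, smul_eq_mul]
  norm_num [mul_comm]

theorem exists_of_mem_codeVectors (hv : v ∈ codeVectors C) :
    ∃ c ∈ C, v ∈ oddSignVectors (wordSupport c) := by
  simpa [codeVectors] using hv

theorem mem_codeVectors : v ∈ codeVectors C ↔
    ∃ c ∈ C, (∀ i, c i ≠ 0 → v i = 1 ∨ v i = -1) ∧ (∀ i, c i = 0 → v i = 0) ∧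
      Odd {i | v i = -1}.ncard := by
  simp only [codeVectors, mem_biUnion, mem_oddSignVectors, wordSupport, mem_filter, mem_univ,
    true_and, not_not]

theorem norm_sq_of_mem_codeVectors (hweight : ∀ c ∈ C, hammingNorm c = 8)
    (hv : v ∈ codeVectors C) : ‖v‖ ^ 2 = 8 := by
  obtain ⟨c, hc, hv⟩ := exists_of_mem_codeVectors hv
  rw [norm_sq_of_mem_oddSignVectors hv, card_wordSupport, hweight c hc]
  norm_num

theorem inner_le_four_of_mem_codeVectors (hweight : ∀ c ∈ C, hammingNorm c = 8)
    (hdist : ∀ c ∈ C, ∀ c' ∈ C, c ≠ c' → 8 ≤ hammingDist c c')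
    (hv : v ∈ codeVectors C) (hw : w ∈ codeVectors C) (hne : v ≠ w) : ⟪v, w⟫ ≤ 4 := by
  obtain ⟨c, hc, hv⟩ := exists_of_mem_codeVectors hv
  obtain ⟨c', hc', hw⟩ := exists_of_mem_codeVectors hw
  by_cases hcc : c = c'
  · subst hcc
    have := inner_le_card_sub_four_of_mem_oddSignVectors hv hw hne
    rw [card_wordSupport, hweight c hc] at this
    exact this.trans (by norm_num)
  · have hinter := hammingNorm_add_hammingNorm c c'
    rw [hweight c hc, hweight c' hc'] at hinter
    have h4 : #(wordSupport c ∩ wordSupport c') ≤ 4 := by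
      have := hdist c hc c' hc' hcc
      omega
    calc ⟪v, w⟫ ≤ #(wordSupport c ∩ wordSupport c') :=
          inner_le_card_inter (mem_filter.1 hv).1 (mem_filter.1 hw).1
      _ ≤ 4 := by exact_mod_cast h4

end Codes

section Enlarged

variable {ι : Type*} [Fintype ι] [DecidableEq ι]

noncomputable def enlargedConfig (C D : Finset (ι → ZMod 2)) (r : ℝ) :
    Finset (EuclideanSpace ℝ ι) :=
  pairVectors ι ∪ codeVectors C ∪ D.image (signVec r)

variable {C D : Finset (ι → ZMod 2)} {r : ℝ} {v w : EuclideanSpace ℝ ι}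

theorem inner_signVec_le_four_of_mem_codeVectors (hr : 0 ≤ r) (hr3 : 3 * r ≤ 2)
    (hweight : ∀ c ∈ C, hammingNorm c = 8) {d : ι → ZMod 2}
    (hd : ∀ c ∈ C, ∑ i, d i * c i = 0) (hv : v ∈ codeVectors C) :
    ⟪v, signVec r d⟫ ≤ 4 := by
  obtain ⟨c, hc, hv⟩ := exists_of_mem_codeVectors hv
  have := inner_signVec_le_of_mem_oddSignVectors hr
    (by rw [sum_wordSupport_eq_sum_mul]; exact hd c hc) hv
  rw [card_wordSupport, hweight c hc] at this
  push_cast at this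
  linarith

theorem card_support_of_mem_pairVectors (hv : v ∈ pairVectors ι) :
    #({i | v i ≠ 0} : Finset ι) = 2 := by
  obtain ⟨S, hS, hv⟩ := exists_of_mem_pairVectors hv
  rw [support_eq_of_mem_vectorsOn (by norm_num) hv, hS]

theorem card_support_of_mem_codeVectors (hweight : ∀ c ∈ C, hammingNorm c = 8)
    (hv : v ∈ codeVectors C) : #({i | v i ≠ 0} : Finset ι) = 8 := by
  obtain ⟨c, hc, hv⟩ := exists_of_mem_codeVectors hv
  rw [support_eq_of_mem_vectorsOn (by norm_num) (mem_filter.1 hv).1, card_wordSupport,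
    hweight c hc]

theorem card_support_signVec (hr : r ≠ 0) (z : ι → ZMod 2) :
    #({i | signVec r z i ≠ 0} : Finset ι) = Fintype.card ι := by
  rw [support_eq_of_mem_vectorsOn (by simp [hr, hr.symm]) (signVec_mem_vectorsOn z), card_univ]

omit [DecidableEq ι] in
theorem disjoint_of_card_support {X Y : Finset (EuclideanSpace ℝ ι)} {a b : ℕ}
    (hX : ∀ v ∈ X, #({i | v i ≠ 0} : Finset ι) = a)
    (hY : ∀ v ∈ Y, #({i | v i ≠ 0} : Finset ι) = b) (hab : a ≠ b) : Disjoint X Y :=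
  disjoint_left.2 fun v hvX hvY => hab ((hX v hvX).symm.trans (hY v hvY))

theorem norm_sq_of_mem_enlargedConfig (hweight : ∀ c ∈ C, hammingNorm c = 8)
    (hr : Fintype.card ι * r ^ 2 = 8) (hv : v ∈ enlargedConfig C D r) : ‖v‖ ^ 2 = 8 := by
  rcases mem_union.1 hv with hv | hv
  · rcases mem_union.1 hv with hv | hv
    · exact norm_sq_of_mem_pairVectors hv
    · exact norm_sq_of_mem_codeVectors hweight hv
  · obtain ⟨d, -, rfl⟩ := mem_image.1 hv
    rw [norm_sq_signVec, hr]

theorem inner_le_four_of_mem_enlargedConfig (hr : 0 ≤ r) (hr3 : 3 * r ≤ 2)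
    (hweight : ∀ c ∈ C, hammingNorm c = 8)
    (hdist : ∀ c ∈ C, ∀ c' ∈ C, c ≠ c' → 8 ≤ hammingDist c c')
    (horth : ∀ d ∈ D, ∀ c ∈ C, ∑ i, d i * c i = 0)
    (hD : ∀ d ∈ D, ∀ d' ∈ D, d ≠ d' → ⟪signVec r d, signVec r d'⟫ ≤ 4)
    (hv : v ∈ enlargedConfig C D r) (hw : w ∈ enlargedConfig C D r) (hne : v ≠ w) :
    ⟪v, w⟫ ≤ 4 := by
  have hcode : ∀ u ∈ codeVectors C, ∀ i, |u i| ≤ 1 := fun u hu i => by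
    obtain ⟨c, -, hu⟩ := exists_of_mem_codeVectors hu
    exact abs_apply_le_one_of_mem_oddSignVectors hu i
  have hsign : ∀ (d : ι → ZMod 2) i, |signVec r d i| ≤ 1 := fun d i =>
    abs_apply_le_of_mem_vectorsOn zero_le_one (by simp [abs_of_nonneg hr]; linarith)
      (signVec_mem_vectorsOn d) i
  simp only [enlargedConfig, mem_union, mem_image] at hv hw
  rcases hv with (hv | hv) | ⟨d, hd, rfl⟩ <;> rcases hw with (hw | hw) | ⟨d', hd', rfl⟩
  · exact inner_le_four_of_mem_pairVectors_of_ne hv hw hne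
  · exact inner_le_four_of_mem_pairVectors hv (hcode w hw)
  · exact inner_le_four_of_mem_pairVectors hv (hsign d')
  · exact real_inner_comm v w ▸ inner_le_four_of_mem_pairVectors hw (hcode v hv)
  · exact inner_le_four_of_mem_codeVectors hweight hdist hv hw hne
  · exact inner_signVec_le_four_of_mem_codeVectors hr hr3 hweight (horth d' hd') hv
  · exact real_inner_comm _ w ▸ inner_le_four_of_mem_pairVectors hw (hsign d)
  · exact real_inner_comm _ w ▸
      inner_signVec_le_four_of_mem_codeVectors hr hr3 hweight (horth d hd) hw
  · exact hD d hd d' hd' fun h => hne (h ▸ rfl)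

theorem card_enlargedConfig (hweight : ∀ c ∈ C, hammingNorm c = 8) (hr : r ≠ 0)
    (hcard : 8 < Fintype.card ι) :
    #(enlargedConfig C D r) = 4 * (Fintype.card ι).choose 2 + 128 * #C + #D := by
  have hsign : ∀ u ∈ D.image (signVec r), #({i | u i ≠ 0} : Finset ι) = Fintype.card ι := by
    simp only [mem_image]
    rintro _ ⟨z, -, rfl⟩
    exact card_support_signVec hr z
  rw [enlargedConfig, card_union_of_disjoint (disjoint_union_left.2
      ⟨disjoint_of_card_support (fun _ => card_support_of_mem_pairVectors) hsign (by omega),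
        disjoint_of_card_support (fun _ => card_support_of_mem_codeVectors hweight) hsign
          (by omega)⟩),
    card_union_of_disjoint (disjoint_of_card_support (fun _ => card_support_of_mem_pairVectors)
      (fun _ => card_support_of_mem_codeVectors hweight) (by norm_num)),
    card_pairVectors, card_codeVectors hweight, card_image_of_injective _ (signVec_injective hr)]

end Enlarged

theorem oddKissingConfig_eq {n : ℕ} (C : Finset (Fin n → ZMod 2)) :
    oddKissingConfig n C = ↑(pairVectors (Fin n) ∪ codeVectors C) := by
  ext v
  simp only [oddKissingConfig, Set.mem_ofPred_eq, coe_union, Set.mem_union, mem_coe,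
    mem_pairVectors, mem_codeVectors]

theorem signVector_eq_signVec (n : ℕ) : signVector n = signVec (√(8 / n)) := rfl

theorem inner_signVector_le_four {n : ℕ} (hn : 0 < n) {d d' : Fin n → ZMod 2}
    (hdist : (n : ℝ) / 4 ≤ hammingDist d d') : ⟪signVector n d, signVector n d'⟫ ≤ 4 := by
  have hn' : (0 : ℝ) < n := by exact_mod_cast hn
  rw [signVector_eq_signVec, inner_signVec_signVec, Fintype.card_fin,
    Real.sq_sqrt (by positivity), mul_div_assoc', div_le_iff₀ hn']
  linarith

theorem three_mul_sqrt_eight_div_le_two {n : ℕ} (hn : 18 ≤ n) : 3 * √(8 / n) ≤ 2 := by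
  have hn18 : (18 : ℝ) ≤ n := by exact_mod_cast hn
  have hsq : 8 / (n : ℝ) ≤ (2 / 3) ^ 2 := by
    rw [div_le_iff₀ (by linarith)]
    linarith
  linarith [Real.sqrt_le_iff.2 ⟨by norm_num, hsq⟩]

/-- Let `n ≥ 18`, let `C ⊆ 𝔽₂ⁿ` be a constant-weight-8 code of minimum distance 8,
and let `D ⊆ 𝔽₂ⁿ` be a set of vectors orthogonal to every codeword of `C` mod 2,
with pairwise Hamming distances at least `n/4`.  Then adjoining the vectors `v_d`
for `d ∈ D` to the odd-signs configuration of `C` still gives vectors of squared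
norm 8 with pairwise inner products at most 4, and the enlarged configuration has
`4·(n choose 2) + 128·|C| + |D|` elements. -/
theorem oddKissingConfig_enlarged (n : ℕ) (hn : 18 ≤ n)
    (C : Finset (Fin n → ZMod 2))
    (hweight : ∀ c ∈ C, hammingNorm c = 8)
    (hdist : ∀ c ∈ C, ∀ c' ∈ C, c ≠ c' → 8 ≤ hammingDist c c')
    (D : Finset (Fin n → ZMod 2))
    (horth : ∀ d ∈ D, ∀ c ∈ C, (∑ i : Fin n, d i * c i) = 0)
    (hDdist : ∀ d ∈ D, ∀ d' ∈ D, d ≠ d' → (n : ℝ) / 4 ≤ (hammingDist d d' : ℝ)) :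
    (∀ v ∈ oddKissingConfig n C ∪ signVector n '' ↑D, ‖v‖ ^ 2 = 8) ∧
    (∀ v ∈ oddKissingConfig n C ∪ signVector n '' ↑D,
      ∀ w ∈ oddKissingConfig n C ∪ signVector n '' ↑D, v ≠ w → ⟪v, w⟫ ≤ 4) ∧
    (oddKissingConfig n C ∪ signVector n '' ↑D).ncard =
      4 * n.choose 2 + 128 * C.card + D.card := by
  have hn0 : 0 < n := by omega
  have hunion : oddKissingConfig n C ∪ signVector n '' ↑D =
      ↑(enlargedConfig C D √(8 / n)) := by
    simp only [enlargedConfig, oddKissingConfig_eq, signVector_eq_signVec, coe_union, coe_image]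
  rw [hunion]
  refine ⟨fun v hv => norm_sq_of_mem_enlargedConfig hweight ?_ hv, fun v hv w hw hne => ?_, ?_⟩
  · rw [Fintype.card_fin, Real.sq_sqrt (by positivity)]
    field_simp
  · exact inner_le_four_of_mem_enlargedConfig (Real.sqrt_nonneg _)
      (three_mul_sqrt_eight_div_le_two hn) hweight hdist horth
      (fun d hd d' hd' hdd' => inner_signVector_le_four hn0 (hDdist d hd d' hd' hdd')) hv hw hne
  · rw [Set.ncard_coe_finset, card_enlargedConfig hweight (by positivity) (by simp; omega),
      Fintype.card_fin]
end

section
/- There exist finite sets C, D ⊆ 𝔽₂^21 such that: every element of C has Hamming weight exactly 8; any two distinct elements of C have Hamming distance at least 8; |C| = 210; any two distinct elements of D have Hamming distance at least 6; |D| = 2048; and every d ∈ D satisfies Σᵢ dᵢcᵢ = 0 in 𝔽₂ for every c ∈ C. -/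
/-!
`D` is the `[21, 11, 6]` code obtained from the extended Golay code `G₂₄` by puncturing two
coordinates and shortening a third, and `C` is the set of weight-8 words of the `[21, 9, 8]`
code `E` obtained from `G₂₄` by shortening the same three coordinates: the octads of
`S(5, 8, 24)` that avoid three points, of which there are `759 - 3·253 + 3·77 - 21 = 210`.
Since `G₂₄` is self-dual and the words of `E` vanish on the three removed coordinates, `D ⊥ E`.

Both codes are given by generators, written as bitmasks. Linearity reduces the distance bounds to
minimum weights, orthogonality to orthogonality of generators, and the sizes to independence of
generators; these finite facts are then checked by evaluation in the kernel.
-/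

namespace BinaryCode

variable {n : ℕ}

def ofBits (n m : ℕ) : Fin n → ZMod 2 := fun i => if m.testBit i then 1 else 0

@[simp]
theorem ofBits_zero : ofBits n 0 = 0 := by
  funext i
  simp [ofBits]

theorem ofBits_xor (a b : ℕ) : ofBits n (a ^^^ b) = ofBits n a + ofBits n b := by
  funext i
  simp only [ofBits, Nat.testBit_xor, Pi.add_apply]
  cases a.testBit i <;> cases b.testBit i <;> decide

theorem ofBits_injOn : Set.InjOn (ofBits n) {m | m < 2 ^ n} := by
  intro a ha b hb h
  refine Nat.eq_of_testBit_eq fun i => ?_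
  by_cases hi : i < n
  · have := congrFun h ⟨i, hi⟩
    simp only [ofBits] at this
    cases ha' : a.testBit i <;> cases hb' : b.testBit i <;> simp_all
  · have hle : 2 ^ n ≤ 2 ^ i := Nat.pow_le_pow_right two_pos (not_lt.mp hi)
    rw [Nat.testBit_lt_two_pow (ha.trans_le hle), Nat.testBit_lt_two_pow (hb.trans_le hle)]

def xorSpan : List ℕ → List ℕ
  | [] => [0]
  | g :: gs => xorSpan gs ++ (xorSpan gs).map (· ^^^ g)

theorem length_xorSpan (gs : List ℕ) : (xorSpan gs).length = 2 ^ gs.length := by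
  induction gs with
  | nil => rfl
  | cons g gs ih => simp [xorSpan, ih, pow_succ, mul_two]

theorem mem_xorSpan_cons {g x : ℕ} {gs : List ℕ} :
    x ∈ xorSpan (g :: gs) ↔ x ∈ xorSpan gs ∨ x ^^^ g ∈ xorSpan gs := by
  simp only [xorSpan, List.mem_append, List.mem_map]
  refine or_congr_right ⟨?_, fun h => ⟨_, h, Nat.xor_xor_cancel_right x g⟩⟩
  rintro ⟨y, hy, rfl⟩
  simpa using hy

theorem xorSpan_induction {P : ℕ → Prop} {gs : List ℕ} (zero : P 0)
    (xor : ∀ g ∈ gs, ∀ x, P x → P (x ^^^ g)) : ∀ x ∈ xorSpan gs, P x := by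
  induction gs with
  | nil => simpa [xorSpan]
  | cons g gs ih =>
    have ih := ih fun g' hg' => xor g' (.tail _ hg')
    simp only [xorSpan, List.mem_append, List.mem_map]
    rintro _ (hx | ⟨x, hx, rfl⟩)
    exacts [ih _ hx, xor g (.head _) x (ih x hx)]

theorem xor_mem_xorSpan {gs : List ℕ} {x y : ℕ} (hx : x ∈ xorSpan gs) (hy : y ∈ xorSpan gs) :
    x ^^^ y ∈ xorSpan gs := by
  induction gs generalizing x y with
  | nil => simp_all [xorSpan]
  | cons g gs ih =>
    rw [mem_xorSpan_cons] at hx hy ⊢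
    rcases hx with hx | hx <;> rcases hy with hy | hy
    · exact .inl (ih hx hy)
    · simpa [Nat.xor_assoc] using Or.inr (ih hx hy)
    · simpa [Nat.xor_right_comm] using Or.inr (ih hx hy)
    · simpa [Nat.xor_assoc, Nat.xor_left_comm, Nat.xor_comm] using Or.inl (ih hx hy)

theorem lt_two_pow_of_mem_xorSpan {gs : List ℕ} (h : ∀ g ∈ gs, g < 2 ^ n) :
    ∀ x ∈ xorSpan gs, x < 2 ^ n :=
  xorSpan_induction (Nat.two_pow_pos n) fun g hg _ hx => Nat.xor_lt_two_pow hx (h g hg)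

def IsXorIndependent : List ℕ → Prop
  | [] => True
  | g :: gs => g ∉ xorSpan gs ∧ IsXorIndependent gs

instance decidableIsXorIndependent : DecidablePred IsXorIndependent
  | [] => inferInstanceAs (Decidable True)
  | _ :: gs =>
    haveI := decidableIsXorIndependent gs
    inferInstanceAs (Decidable (_ ∧ _))

theorem nodup_xorSpan {gs : List ℕ} (h : IsXorIndependent gs) : (xorSpan gs).Nodup := by
  induction gs with
  | nil => simp [xorSpan]
  | cons g gs ih =>
    obtain ⟨hg, h⟩ := h
    refine List.nodup_append.mpr ⟨ih h, (ih h).map Nat.xor_left_injective, ?_⟩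
    rintro x hx _ hgy rfl
    obtain ⟨y, hy, rfl⟩ := List.mem_map.mp hgy
    exact hg (by simpa using xor_mem_xorSpan hy hx)

theorem card_toFinset_map_ofBits {L : List ℕ} (hL : L.Nodup) (hlt : ∀ x ∈ L, x < 2 ^ n) :
    (L.map (ofBits n)).toFinset.card = L.length := by
  rw [List.toFinset_card_of_nodup (hL.map_on fun x hx y hy => ofBits_injOn (hlt x hx) (hlt y hy)),
    List.length_map]

theorem le_hammingDist_ofBits {gs : List ℕ} {d x y : ℕ}
    (h : ∀ z ∈ xorSpan gs, z ≠ 0 → d ≤ hammingNorm (ofBits n z))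
    (hx : x ∈ xorSpan gs) (hy : y ∈ xorSpan gs) (hne : ofBits n x ≠ ofBits n y) :
    d ≤ hammingDist (ofBits n x) (ofBits n y) := by
  rw [hammingDist_eq_hammingNorm, neg_add_eq_sub, ZModModule.sub_eq_add, ← ofBits_xor]
  exact h _ (xor_mem_xorSpan hy hx) fun h0 => hne (by rw [Nat.xor_eq_zero_iff.mp h0])

theorem ofBits_dotProduct_eq_zero {gs hs : List ℕ}
    (h : ∀ g ∈ gs, ∀ g' ∈ hs, ofBits n g ⬝ᵥ ofBits n g' = 0) :
    ∀ x ∈ xorSpan gs, ∀ y ∈ xorSpan hs, ofBits n x ⬝ᵥ ofBits n y = 0 := by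
  refine xorSpan_induction (by simp) fun g hg x hx y hy => ?_
  rw [ofBits_xor, add_dotProduct, hx y hy, zero_add]
  revert y
  refine xorSpan_induction (by simp) fun g' hg' y hy => ?_
  rw [ofBits_xor, dotProduct_add, hy, h g hg g' hg', add_zero]

def gensD : List ℕ :=
  [1049445, 529012, 266541, 135499, 70173, 36922, 21254, 13107, 2396, 1619, 255]

def gensE : List ℕ := [1118584, 591418, 329059, 197462, 38505, 21845, 13107, 3855, 255]

theorem lt_two_pow_of_mem_gensD : ∀ g ∈ gensD, g < 2 ^ 21 := by decide

theorem lt_two_pow_of_mem_gensE : ∀ g ∈ gensE, g < 2 ^ 21 := by decide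

theorem isXorIndependent_gensD : IsXorIndependent gensD := by decide +kernel

theorem isXorIndependent_gensE : IsXorIndependent gensE := by decide +kernel

theorem six_le_hammingNorm_of_mem_xorSpan_gensD :
    ∀ x ∈ xorSpan gensD, x ≠ 0 → 6 ≤ hammingNorm (ofBits 21 x) := by
  decide +kernel

theorem eight_le_hammingNorm_of_mem_xorSpan_gensE :
    ∀ x ∈ xorSpan gensE, x ≠ 0 → 8 ≤ hammingNorm (ofBits 21 x) := by
  decide +kernel

theorem ofBits_gensD_dotProduct_gensE :
    ∀ g ∈ gensD, ∀ g' ∈ gensE, ofBits 21 g ⬝ᵥ ofBits 21 g' = 0 := by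
  decide +kernel

def octads : List ℕ := (xorSpan gensE).filter fun x => hammingNorm (ofBits 21 x) = 8

theorem mem_octads {x : ℕ} : x ∈ octads ↔ x ∈ xorSpan gensE ∧ hammingNorm (ofBits 21 x) = 8 := by
  simp [octads]

theorem nodup_octads : octads.Nodup := (nodup_xorSpan isXorIndependent_gensE).filter _

theorem length_octads : octads.length = 210 := by decide +kernel

end BinaryCode

open BinaryCode in
/-- There exist codes `C, D ⊆ 𝔽₂^21` such that every element of `C` has Hamming
weight exactly 8, distinct elements of `C` are at Hamming distance at least 8,
`|C| = 210`, distinct elements of `D` are at Hamming distance at least 6,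
`|D| = 2048`, and every element of `D` is orthogonal (mod 2) to every element of `C`. -/
theorem exists_codes_dim21 :
    ∃ C D : Finset (Fin 21 → ZMod 2),
      (∀ c ∈ C, hammingNorm c = 8) ∧
      (∀ c ∈ C, ∀ c' ∈ C, c ≠ c' → 8 ≤ hammingDist c c') ∧
      C.card = 210 ∧
      (∀ d ∈ D, ∀ d' ∈ D, d ≠ d' → 6 ≤ hammingDist d d') ∧
      D.card = 2048 ∧
      (∀ d ∈ D, ∀ c ∈ C, (∑ i : Fin 21, d i * c i) = 0) := by
  have hE (x : ℕ) (hx : x ∈ octads) : x ∈ xorSpan gensE := (mem_octads.mp hx).1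
  refine ⟨(octads.map (ofBits 21)).toFinset, ((xorSpan gensD).map (ofBits 21)).toFinset,
    ?_, ?_, ?_, ?_, ?_, ?_⟩
  · simpa only [List.mem_toFinset, List.forall_mem_map] using fun x hx => (mem_octads.mp hx).2
  · simpa only [List.mem_toFinset, List.forall_mem_map] using fun x hx y hy =>
      le_hammingDist_ofBits eight_le_hammingNorm_of_mem_xorSpan_gensE (hE x hx) (hE y hy)
  · rw [card_toFinset_map_ofBits nodup_octads
      fun x hx => lt_two_pow_of_mem_xorSpan lt_two_pow_of_mem_gensE x (hE x hx), length_octads]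
  · simpa only [List.mem_toFinset, List.forall_mem_map] using fun x hx y hy =>
      le_hammingDist_ofBits six_le_hammingNorm_of_mem_xorSpan_gensD hx hy
  · rw [card_toFinset_map_ofBits (nodup_xorSpan isXorIndependent_gensD)
      (lt_two_pow_of_mem_xorSpan lt_two_pow_of_mem_gensD), length_xorSpan]
    rfl
  · simp only [List.mem_toFinset, List.forall_mem_map]
    exact fun x hx y hy => ofBits_dotProduct_eq_zero ofBits_gensD_dotProduct_gensE x hx y (hE y hy)
end
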